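/- arXiv:2402.16015 — 4 statements merged into one kernel-verified Lean document; each statement's English description precedes it below -/
import Mathlib

section
/- Let Ã be a real matrix of full row rank and Z a square matrix such that Ã Ãᵀ and Ã(I+Z)Ãᵀ are invertible and the spectral radius of Ω_Ã Z is less than 1, where Ω_Ã = Ãᵀ(Ã Ãᵀ)⁻¹Ã. Then Ãᵀ (Ã(I+Z)Ãᵀ)⁻¹ Ã = (I + Ω_Ã Z)⁻¹ Ω_Ã = Ω_Ã (I + Z Ω_Ã)⁻¹. -/
open Matrix

/-- Woodbury-type identity: for `Ã` of full row rank with `Ã Ãᵀ` and `Ã(I+Z)Ãᵀ`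
invertible and the spectral radius of `Ω_Ã Z` less than 1,
`Ãᵀ (Ã(I+Z)Ãᵀ)⁻¹ Ã = (I + Ω_Ã Z)⁻¹ Ω_Ã = Ω_Ã (I + Z Ω_Ã)⁻¹`. -/
theorem projector_resolvent_identity
    {r m : ℕ} (A : Matrix (Fin r) (Fin m) ℝ) (Z : Matrix (Fin m) (Fin m) ℝ)
    (hA : A.rank = r)
    (h1 : IsUnit (A * Aᵀ).det)
    (h2 : IsUnit (A * (1 + Z) * Aᵀ).det)
    (hsr : ∀ μ ∈ spectrum ℂ (((Aᵀ * (A * Aᵀ)⁻¹ * A) * Z).map (Complex.ofReal)), ‖μ‖ < 1) :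
    Aᵀ * (A * (1 + Z) * Aᵀ)⁻¹ * A
      = (1 + (Aᵀ * (A * Aᵀ)⁻¹ * A) * Z)⁻¹ * (Aᵀ * (A * Aᵀ)⁻¹ * A) ∧
    Aᵀ * (A * (1 + Z) * Aᵀ)⁻¹ * A
      = (Aᵀ * (A * Aᵀ)⁻¹ * A) * (1 + Z * (Aᵀ * (A * Aᵀ)⁻¹ * A))⁻¹ := by
  -- invertibility of 1 + ΩZ from the spectral radius condition
  have hdet : IsUnit (1 + (Aᵀ * (A * Aᵀ)⁻¹ * A) * Z).det := by
    set Ω := Aᵀ * (A * Aᵀ)⁻¹ * A with hΩ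
    by_contra hcon
    have hd0 : (1 + Ω * Z).det = 0 := by
      rwa [isUnit_iff_ne_zero, not_ne_iff] at hcon
    have hmem : (-1 : ℂ) ∈ spectrum ℂ ((Ω * Z).map (Complex.ofReal)) := by
      rw [spectrum.mem_iff]
      intro hu
      rw [Matrix.isUnit_iff_isUnit_det] at hu
      have e : (algebraMap ℂ (Matrix (Fin m) (Fin m) ℂ) (-1) - (Ω * Z).map Complex.ofReal)
          = -(1 + (Ω * Z).map Complex.ofReal) := by
        rw [map_neg, _root_.map_one, neg_add, sub_eq_add_neg]
      have e2 : (1 + (Ω * Z).map Complex.ofReal).det = 0 := by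
        have emap : (1 + (Ω * Z).map Complex.ofReal) = (1 + Ω * Z).map Complex.ofRealHom := by
          ext i j
          by_cases hij : i = j <;>
            simp [Matrix.map_apply, Matrix.add_apply, Matrix.one_apply, hij]
        have h3 := (RingHom.map_det Complex.ofRealHom (1 + Ω * Z)).symm
        rw [RingHom.mapMatrix_apply, hd0] at h3
        rw [emap, h3]
        simp
      rw [e, Matrix.det_neg, e2, mul_zero] at hu
      exact hu.ne_zero rfl
    have := hsr _ hmem
    simp at this
  have hdet' : IsUnit (1 + Z * (Aᵀ * (A * Aᵀ)⁻¹ * A)).det := by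
    rwa [← Matrix.det_one_add_mul_comm]
  have hinv1 : (A * Aᵀ)⁻¹ * (A * Aᵀ) = 1 := Matrix.nonsing_inv_mul _ h1
  have hinv1' : (A * Aᵀ) * (A * Aᵀ)⁻¹ = 1 := Matrix.mul_nonsing_inv _ h1
  have hinv2 : (A * (1 + Z) * Aᵀ) * (A * (1 + Z) * Aᵀ)⁻¹ = 1 :=
    Matrix.mul_nonsing_inv _ h2
  have hinv2' : (A * (1 + Z) * Aᵀ)⁻¹ * (A * (1 + Z) * Aᵀ) = 1 :=
    Matrix.nonsing_inv_mul _ h2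
  -- abstract the inverses as atoms
  obtain ⟨W, hW, hW'⟩ : ∃ W, W * (A * Aᵀ) = 1 ∧ (A * Aᵀ) * W = 1 :=
    ⟨(A * Aᵀ)⁻¹, hinv1, hinv1'⟩
  -- we keep (A*Aᵀ)⁻¹ in the statement but rewrite via key identities
  set C := (A * (1 + Z) * Aᵀ)⁻¹ with hC
  set N := (A * Aᵀ)⁻¹ with hN
  have hBsplit : A * (1 + Z) * Aᵀ = A * Aᵀ + A * (Z * Aᵀ) := by
    rw [Matrix.mul_add, Matrix.mul_one, Matrix.add_mul, Matrix.mul_assoc]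
  have key : (1 + (Aᵀ * N * A) * Z) * (Aᵀ * C * A) = Aᵀ * N * A := by
    calc (1 + (Aᵀ * N * A) * Z) * (Aᵀ * C * A)
        = Aᵀ * (C * A) + Aᵀ * (N * (A * (Z * (Aᵀ * (C * A))))) := by
          rw [Matrix.add_mul, Matrix.one_mul]
          simp only [Matrix.mul_assoc]
      _ = Aᵀ * (N * ((A * Aᵀ) * (C * A))) + Aᵀ * (N * ((A * (Z * Aᵀ)) * (C * A))) := by
          congr 1
          · rw [← Matrix.mul_assoc N, hinv1, Matrix.one_mul]
          · simp only [Matrix.mul_assoc]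
      _ = Aᵀ * (N * ((A * Aᵀ + A * (Z * Aᵀ)) * (C * A))) := by
          rw [Matrix.add_mul, Matrix.mul_add, Matrix.mul_add]
      _ = Aᵀ * (N * A) := by
          rw [← hBsplit, ← Matrix.mul_assoc (A * (1 + Z) * Aᵀ) C A, hinv2, Matrix.one_mul]
      _ = Aᵀ * N * A := (Matrix.mul_assoc _ _ _).symm
  have key2 : (Aᵀ * C * A) * (1 + Z * (Aᵀ * N * A)) = Aᵀ * N * A := by
    calc (Aᵀ * C * A) * (1 + Z * (Aᵀ * N * A))
        = Aᵀ * (C * A) + Aᵀ * (C * (A * (Z * (Aᵀ * (N * A))))) := by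
          rw [Matrix.mul_add, Matrix.mul_one]
          simp only [Matrix.mul_assoc]
      _ = Aᵀ * (C * ((A * Aᵀ) * (N * A))) + Aᵀ * (C * ((A * (Z * Aᵀ)) * (N * A))) := by
          congr 1
          · rw [← Matrix.mul_assoc (A * Aᵀ), hinv1', Matrix.one_mul]
          · simp only [Matrix.mul_assoc]
      _ = Aᵀ * (C * ((A * Aᵀ + A * (Z * Aᵀ)) * (N * A))) := by
          rw [Matrix.add_mul, Matrix.mul_add, Matrix.mul_add]
      _ = Aᵀ * (N * A) := by
          rw [← hBsplit, ← Matrix.mul_assoc C (A * (1 + Z) * Aᵀ) (N * A), hinv2',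
            Matrix.one_mul]
      _ = Aᵀ * N * A := (Matrix.mul_assoc _ _ _).symm
  constructor
  · have h := congrArg (fun M => (1 + (Aᵀ * N * A) * Z)⁻¹ * M) key
    rw [← Matrix.mul_assoc, Matrix.nonsing_inv_mul _ hdet, Matrix.one_mul] at h
    exact h
  · have h := congrArg (fun M => M * (1 + Z * (Aᵀ * N * A))⁻¹) key2
    rw [Matrix.mul_assoc, Matrix.mul_nonsing_inv _ hdet', Matrix.mul_one] at h
    exact h
end

section
/- Let B be a real n×m matrix, G a diagonal positive-definite m×m matrix, L = B G Bᵀ, and L⁺ its Moore–Penrose pseudoinverse. Then Ω := Bᵀ L⁺ B G satisfies Ω² = Ω. -/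
open Matrix

/-- `P` is the Moore–Penrose pseudoinverse of `L`. -/
def IsMoorePenroseInv {k : ℕ} (L P : Matrix (Fin k) (Fin k) ℝ) : Prop :=
  L * P * L = L ∧ P * L * P = P ∧ (L * P)ᵀ = L * P ∧ (P * L)ᵀ = P * L

/-- For an incidence matrix `B`, diagonal positive-definite conductance matrix `G`,
Laplacian `L = B G Bᵀ` with Moore–Penrose pseudoinverse `L⁺`, the matrix
`Ω = Bᵀ L⁺ B G` is idempotent. -/
theorem laplacian_projector_idempotent
    {n m : ℕ} (B : Matrix (Fin n) (Fin m) ℝ) (g : Fin m → ℝ) (hg : ∀ i, 0 < g i)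
    (P : Matrix (Fin n) (Fin n) ℝ)
    (hP : IsMoorePenroseInv (B * diagonal g * Bᵀ) P) :
    (Bᵀ * P * B * diagonal g) * (Bᵀ * P * B * diagonal g)
      = Bᵀ * P * B * diagonal g := by
  have h := hP.2.1
  calc (Bᵀ * P * B * diagonal g) * (Bᵀ * P * B * diagonal g)
      = Bᵀ * (P * (B * diagonal g * Bᵀ) * P) * (B * diagonal g) := by
        simp only [Matrix.mul_assoc]
    _ = Bᵀ * P * B * diagonal g := by rw [h]; simp only [Matrix.mul_assoc]
end

section
/- Let Ω be a symmetric real m×m projection matrix, ξ ≥ 0, X diagonal with entries in [0,1], α > 0, β ≠ 0, and let y ∈ ℝ^m. Suppose x(t) solves ẋ = α x - (1/β)(I + ξ Ω X)⁻¹ y with X(t) = diag(x(t)) and all x_i(t) ∈ [0,1]. Then the function L(x) = -(1/3) xᵀ X x - (ξ/4) xᵀ X Ω X x + (1/(2αβ)) xᵀ X y satisfies dL/dt = -(1/α) ẋᵀ √X (I + ξ √X Ω √X) √X ẋ ≤ 0 along the trajectory. -/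
open Matrix

/-- Lyapunov function for a purely memristive circuit with linear parametrization:
along solutions of `ẋ = α x - (1/β)(I + ξ Ω X)⁻¹ y` with `x_i(t) ∈ [0,1]`,
`L(x) = -(1/3) xᵀXx - (ξ/4) xᵀXΩXx + (1/(2αβ)) xᵀXy` has derivative
`-(1/α) ẋᵀ √X (I + ξ √X Ω √X) √X ẋ ≤ 0`. -/
theorem memristive_lyapunov_decreasing
    {m : ℕ} (Ω : Matrix (Fin m) (Fin m) ℝ) (hΩ : Ω * Ω = Ω) (hΩs : Ωᵀ = Ω)
    (ξ α β : ℝ) (hξ : 0 ≤ ξ) (hα : 0 < α) (hβ : β ≠ 0) (y : Fin m → ℝ)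
    (x x' : ℝ → Fin m → ℝ)
    (hderiv : ∀ t, HasDerivAt x (x' t) t)
    (hbox : ∀ t i, x t i ∈ Set.Icc (0 : ℝ) 1)
    (hinv : ∀ t, IsUnit (1 + ξ • (Ω * diagonal (x t))).det)
    (hode : ∀ t, x' t
        = α • x t - (1 / β) • ((1 + ξ • (Ω * diagonal (x t)))⁻¹ *ᵥ y)) :
    ∀ t, HasDerivAt
        (fun s => -(1 / 3) * (x s ⬝ᵥ (diagonal (x s) *ᵥ x s))
            - (ξ / 4) * (x s ⬝ᵥ ((diagonal (x s) * Ω * diagonal (x s)) *ᵥ x s))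
            + (1 / (2 * α * β)) * (x s ⬝ᵥ (diagonal (x s) *ᵥ y)))
        (-(1 / α) * (x' t ⬝ᵥ
          ((diagonal (fun i => Real.sqrt (x t i)) *
            (1 + ξ • (diagonal (fun i => Real.sqrt (x t i)) * Ω *
              diagonal (fun i => Real.sqrt (x t i)))) *
            diagonal (fun i => Real.sqrt (x t i))) *ᵥ x' t))) t ∧
      -(1 / α) * (x' t ⬝ᵥ
          ((diagonal (fun i => Real.sqrt (x t i)) *
            (1 + ξ • (diagonal (fun i => Real.sqrt (x t i)) * Ω *
              diagonal (fun i => Real.sqrt (x t i)))) *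
            diagonal (fun i => Real.sqrt (x t i))) *ᵥ x' t)) ≤ 0 := by
  intro t
  have hsym : ∀ i j, Ω i j = Ω j i := fun i j =>
    ((congrFun (congrFun hΩs i) j).symm).trans (Matrix.transpose_apply Ω i j)
  have hx : ∀ i, HasDerivAt (fun s => x s i) (x' t i) t :=
    fun i => hasDerivAt_pi.mp (hderiv t) i
  set u := x t with hu
  set v := x' t with hv
  have hnn : ∀ i, 0 ≤ u i := fun i => (hbox t i).1
  have hsq : ∀ i, Real.sqrt (u i) * Real.sqrt (u i) = u i :=
    fun i => Real.mul_self_sqrt (hnn i)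
  set W := Ω * diagonal u with hWdef
  have hWapp : ∀ (w : Fin m → ℝ) i, (W *ᵥ w) i = ∑ j, Ω i j * u j * w j := by
    intro w i; simp [hWdef, Matrix.mulVec, Matrix.mul_diagonal, dotProduct]
  -- ODE key identity
  have hAv : v + ξ • (W *ᵥ v) = α • (u + ξ • (W *ᵥ u)) - (1 / β) • y := by
    have h1 : (1 + ξ • W) *ᵥ v = α • ((1 + ξ • W) *ᵥ u) - (1 / β) • y := by
      rw [hv, hode t, Matrix.mulVec_sub, Matrix.mulVec_smul, Matrix.mulVec_smul,
        Matrix.mulVec_mulVec, Matrix.mul_nonsing_inv _ (hinv t), Matrix.one_mulVec]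
    simpa [Matrix.add_mulVec, Matrix.one_mulVec, Matrix.smul_mulVec,
      smul_add] using h1
  have hkey : ∀ i, β * (v i + ξ * (W *ᵥ v) i)
      = α * β * u i + α * β * ξ * (W *ᵥ u) i - y i := by
    intro i
    have h := congrFun hAv i
    simp only [Pi.add_apply, Pi.sub_apply, Pi.smul_apply, smul_eq_mul] at h
    field_simp at h
    linarith [h]
  -- pointwise rewriting of the Lyapunov function
  have e1 : ∀ (w : Fin m → ℝ), w ⬝ᵥ (diagonal w *ᵥ w) = ∑ i, w i * (w i * w i) := by
    intro w; simp [dotProduct, Matrix.mulVec_diagonal]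
  have e2 : ∀ (a w z : Fin m → ℝ), w ⬝ᵥ ((diagonal a * Ω * diagonal a) *ᵥ z)
      = ∑ i, ∑ j, (w i * a i) * (Ω i j * (a j * z j)) := by
    intro a w z
    simp only [dotProduct, Matrix.mulVec, Matrix.mul_diagonal, Matrix.diagonal_mul,
      Finset.mul_sum]
    exact Finset.sum_congr rfl fun i _ => Finset.sum_congr rfl fun j _ => by ring
  have e3 : ∀ (w : Fin m → ℝ), w ⬝ᵥ (diagonal w *ᵥ y) = ∑ i, (w i * w i) * y i := by
    intro w
    simp only [dotProduct, Matrix.mulVec_diagonal]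
    exact Finset.sum_congr rfl fun i _ => by ring
  -- matrix simplification of the sqrt sandwich
  have hdd : diagonal (fun i => Real.sqrt (u i)) * diagonal (fun i => Real.sqrt (u i))
      = diagonal u := by
    rw [Matrix.diagonal_mul_diagonal]
    exact congrArg _ (funext hsq)
  have hM : diagonal (fun i => Real.sqrt (u i)) *
      (1 + ξ • (diagonal (fun i => Real.sqrt (u i)) * Ω *
        diagonal (fun i => Real.sqrt (u i)))) *
      diagonal (fun i => Real.sqrt (u i))
      = diagonal u + ξ • (diagonal u * Ω * diagonal u) := by
    rw [Matrix.mul_add, Matrix.mul_one, Matrix.mul_smul, Matrix.add_mul, Matrix.smul_mul,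
      hdd]
    congr 2
    rw [show diagonal (fun i => Real.sqrt (u i)) *
        (diagonal (fun i => Real.sqrt (u i)) * Ω * diagonal (fun i => Real.sqrt (u i))) *
        diagonal (fun i => Real.sqrt (u i))
        = (diagonal (fun i => Real.sqrt (u i)) * diagonal (fun i => Real.sqrt (u i))) * Ω *
          (diagonal (fun i => Real.sqrt (u i)) * diagonal (fun i => Real.sqrt (u i)))
      from by noncomm_ring, hdd]
  -- value of the quadratic form
  have hQ : v ⬝ᵥ ((diagonal (fun i => Real.sqrt (u i)) *
      (1 + ξ • (diagonal (fun i => Real.sqrt (u i)) * Ω *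
        diagonal (fun i => Real.sqrt (u i)))) *
      diagonal (fun i => Real.sqrt (u i))) *ᵥ v)
      = (∑ i, v i * (u i * v i))
        + ξ * ∑ i, ∑ j, (v i * u i) * (Ω i j * (u j * v j)) := by
    rw [hM, Matrix.add_mulVec, Matrix.smul_mulVec, dotProduct_add,
      dotProduct_smul, smul_eq_mul, e2]
    congr 1
    simp [dotProduct, Matrix.mulVec_diagonal]
  -- projector quadratic form is nonnegative
  have hproj : ∀ z : Fin m → ℝ, 0 ≤ z ⬝ᵥ (Ω *ᵥ z) := by
    intro z
    have h1 : z ⬝ᵥ (Ω *ᵥ z) = (Ω *ᵥ z) ⬝ᵥ (Ω *ᵥ z) := by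
      have hΩ' : Ω = Ωᵀ * Ω := by rw [hΩs, hΩ]
      calc z ⬝ᵥ (Ω *ᵥ z) = z ⬝ᵥ ((Ωᵀ * Ω) *ᵥ z) := by rw [← hΩ']
        _ = z ⬝ᵥ (Ωᵀ *ᵥ (Ω *ᵥ z)) := by rw [← Matrix.mulVec_mulVec]
        _ = (Ω *ᵥ z) ⬝ᵥ (Ω *ᵥ z) := by
            rw [Matrix.dotProduct_mulVec, Matrix.vecMul_transpose]
    rw [h1]
    exact Finset.sum_nonneg fun i _ => mul_self_nonneg _
  constructor
  · -- the derivative computation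
    simp only [e1, e2, e3]
    have hD : HasDerivAt
        (fun s => -(1 / 3) * ∑ i, x s i * (x s i * x s i)
          - ξ / 4 * ∑ i, ∑ j, (x s i * x s i) * (Ω i j * (x s j * x s j))
          + 1 / (2 * α * β) * ∑ i, (x s i * x s i) * y i)
        (-(1 / 3) * ∑ i, (v i * (u i * u i) + u i * (v i * u i + u i * v i))
          - ξ / 4 * ∑ i, ∑ j, ((v i * u i + u i * v i) * (Ω i j * (u j * u j))
              + (u i * u i) * (Ω i j * (v j * u j + u j * v j)))
          + 1 / (2 * α * β) * ∑ i, (v i * u i + u i * v i) * y i) t := by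
      refine HasDerivAt.add (HasDerivAt.sub ?_ ?_) ?_
      · exact (HasDerivAt.fun_sum fun i _ => (hx i).mul ((hx i).mul (hx i))).const_mul _
      · exact (HasDerivAt.fun_sum fun i _ => HasDerivAt.fun_sum fun j _ =>
          ((hx i).mul (hx i)).mul (((hx j).mul (hx j)).const_mul (Ω i j))).const_mul _
      · exact (HasDerivAt.fun_sum fun i _ => ((hx i).mul (hx i)).mul_const (y i)).const_mul _
    have heq : -(1 / α) * ((∑ i, v i * (u i * v i))
          + ξ * ∑ i, ∑ j, (v i * u i) * (Ω i j * (u j * v j)))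
        = -(1 / 3) * ∑ i, (v i * (u i * u i) + u i * (v i * u i + u i * v i))
          - ξ / 4 * ∑ i, ∑ j, ((v i * u i + u i * v i) * (Ω i j * (u j * u j))
              + (u i * u i) * (Ω i j * (v j * u j + u j * v j)))
          + 1 / (2 * α * β) * ∑ i, (v i * u i + u i * v i) * y i := by
      -- swap the symmetric half of the double sum
      have hswap : ∑ i, ∑ j, (u i * u i) * (Ω i j * (v j * u j + u j * v j))
          = ∑ i, ∑ j, (v i * u i + u i * v i) * (Ω i j * (u j * u j)) := by
        rw [Finset.sum_comm]
        refine Finset.sum_congr rfl fun i _ => Finset.sum_congr rfl fun j _ => ?_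
        rw [hsym j i]; ring
      have hsplit : ∀ i, ∑ j, ((v i * u i + u i * v i) * (Ω i j * (u j * u j))
            + (u i * u i) * (Ω i j * (v j * u j + u j * v j)))
          = ∑ j, (v i * u i + u i * v i) * (Ω i j * (u j * u j))
            + ∑ j, (u i * u i) * (Ω i j * (v j * u j + u j * v j)) :=
        fun i => Finset.sum_add_distrib
      have hinner1 : ∀ i, ∑ j, (v i * u i + u i * v i) * (Ω i j * (u j * u j))
          = (v i * u i + u i * v i) * (W *ᵥ u) i := by
        intro i
        rw [hWapp u i, Finset.mul_sum]
        exact Finset.sum_congr rfl fun j _ => by ring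
      have hinner2 : ∀ i, ∑ j, (v i * u i) * (Ω i j * (u j * v j))
          = (v i * u i) * (W *ᵥ v) i := by
        intro i
        rw [hWapp v i, Finset.mul_sum]
        exact Finset.sum_congr rfl fun j _ => by ring
      simp only [hsplit, Finset.sum_add_distrib, hswap, hinner1, hinner2]
      rw [← Finset.sum_add_distrib]
      simp only [Finset.mul_sum, ← Finset.sum_sub_distrib, ← Finset.sum_add_distrib,
        ← Finset.sum_neg_distrib]
      refine Finset.sum_congr rfl fun i _ => ?_
      have hkey2 : u i + ξ * (W *ᵥ u) i - 1 / (α * β) * y i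
          = (1 / α) * (v i + ξ * (W *ᵥ v) i) := by
        have h := hkey i
        field_simp
        linear_combination (-1) * h
      linear_combination (u i * v i) * hkey2
    rw [hQ, heq]
    exact hD
  · -- nonpositivity
    rw [hQ]
    have h1 : 0 ≤ ∑ i, v i * (u i * v i) :=
      Finset.sum_nonneg fun i _ => by nlinarith [hnn i, sq_nonneg (v i)]
    have h2 : 0 ≤ ∑ i, ∑ j, (v i * u i) * (Ω i j * (u j * v j)) := by
      have := hproj (fun i => u i * v i)
      simpa [dotProduct, Matrix.mulVec, Finset.mul_sum, mul_comm, mul_left_comm,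
        mul_assoc] using this
    have : (0:ℝ) ≤ (∑ i, v i * (u i * v i))
        + ξ * ∑ i, ∑ j, (v i * u i) * (Ω i j * (u j * v j)) :=
      add_nonneg h1 (mul_nonneg hξ h2)
    rw [neg_mul]
    exact neg_nonpos.mpr (mul_nonneg (by positivity) this)
end

section
/- Let B be a real matrix of full row rank, Ω_B = Bᵀ(B Bᵀ)⁻¹B, and let R̃ be a diagonal positive-definite matrix such that Ω_A + Ω_B R̃⁻¹ is invertible, where Ω_A = I - Ω_B. Then the matrix Ω := (Ω_A + Ω_B R̃⁻¹)⁻¹ Ω_B R̃⁻¹ satisfies Ω² = Ω, and its complementary projector is I - Ω = (Ω_A + Ω_B R̃⁻¹)⁻¹ Ω_A. -/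
open Matrix

lemma isUnit_det_of_rank_eq {n : ℕ} (A : Matrix (Fin n) (Fin n) ℝ)
    (h : A.rank = n) : IsUnit A.det := by
  rw [← isUnit_iff_isUnit_det, ← Matrix.mulVec_surjective_iff_isUnit]
  have htop : LinearMap.range A.mulVecLin = ⊤ := by
    apply Submodule.eq_top_of_finrank_eq
    rw [← Matrix.rank, h, Module.finrank_pi, Fintype.card_fin]
  intro v
  exact (htop ▸ Submodule.mem_top : v ∈ LinearMap.range A.mulVecLin)

/-- For `Ω_B = Bᵀ(BBᵀ)⁻¹B`, `Ω_A = I - Ω_B`, and diagonal positive-definite `R̃` with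
`Ω_A + Ω_B R̃⁻¹` invertible, the matrix `Ω = (Ω_A + Ω_B R̃⁻¹)⁻¹ Ω_B R̃⁻¹` is idempotent
with complementary projector `I - Ω = (Ω_A + Ω_B R̃⁻¹)⁻¹ Ω_A`. -/
theorem nonorthogonal_projector_formula
    {n m : ℕ} (B : Matrix (Fin n) (Fin m) ℝ) (hrank : B.rank = n)
    (r : Fin m → ℝ) (hr : ∀ i, 0 < r i)
    (hinv : IsUnit ((1 - Bᵀ * (B * Bᵀ)⁻¹ * B)
        + (Bᵀ * (B * Bᵀ)⁻¹ * B) * (diagonal r)⁻¹).det) :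
    (((1 - Bᵀ * (B * Bᵀ)⁻¹ * B) + (Bᵀ * (B * Bᵀ)⁻¹ * B) * (diagonal r)⁻¹)⁻¹ *
        ((Bᵀ * (B * Bᵀ)⁻¹ * B) * (diagonal r)⁻¹)) *
      (((1 - Bᵀ * (B * Bᵀ)⁻¹ * B) + (Bᵀ * (B * Bᵀ)⁻¹ * B) * (diagonal r)⁻¹)⁻¹ *
        ((Bᵀ * (B * Bᵀ)⁻¹ * B) * (diagonal r)⁻¹))
      = ((1 - Bᵀ * (B * Bᵀ)⁻¹ * B) + (Bᵀ * (B * Bᵀ)⁻¹ * B) * (diagonal r)⁻¹)⁻¹ *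
        ((Bᵀ * (B * Bᵀ)⁻¹ * B) * (diagonal r)⁻¹) ∧
    1 - ((1 - Bᵀ * (B * Bᵀ)⁻¹ * B) + (Bᵀ * (B * Bᵀ)⁻¹ * B) * (diagonal r)⁻¹)⁻¹ *
        ((Bᵀ * (B * Bᵀ)⁻¹ * B) * (diagonal r)⁻¹)
      = ((1 - Bᵀ * (B * Bᵀ)⁻¹ * B) + (Bᵀ * (B * Bᵀ)⁻¹ * B) * (diagonal r)⁻¹)⁻¹ *
        (1 - Bᵀ * (B * Bᵀ)⁻¹ * B) := by
  set P : Matrix (Fin m) (Fin m) ℝ := Bᵀ * (B * Bᵀ)⁻¹ * B with hP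
  set D : Matrix (Fin m) (Fin m) ℝ := (diagonal r)⁻¹ with hD
  set S : Matrix (Fin m) (Fin m) ℝ := (1 - P) + P * D with hS
  -- B * Bᵀ is invertible
  have hBBt : IsUnit (B * Bᵀ).det := by
    apply isUnit_det_of_rank_eq
    rw [Matrix.rank_self_mul_transpose, hrank]
  -- P is idempotent
  have hPP : P * P = P := by
    have : P * P = Bᵀ * ((B * Bᵀ)⁻¹ * ((B * Bᵀ) * ((B * Bᵀ)⁻¹ * B))) := by
      rw [hP]; simp only [Matrix.mul_assoc]
    rw [this, ← Matrix.mul_assoc (B * Bᵀ)⁻¹, nonsing_inv_mul _ hBBt, Matrix.one_mul, hP,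
      Matrix.mul_assoc]
  have hSinv : S⁻¹ * S = 1 := nonsing_inv_mul _ hinv
  have hSinv' : S * S⁻¹ = 1 := mul_nonsing_inv _ hinv
  -- (1 - P) * S = 1 - P
  have hkey : (1 - P) * S = 1 - P := by
    have : (1 - P) * S = 1 - P - (P - P * P) + (P - P * P) * D := by
      rw [hS]; noncomm_ring
    rw [this, hPP]; simp
  -- (1 - P) * S⁻¹ = 1 - P
  have hkey2 : (1 - P) * S⁻¹ = 1 - P := by
    calc (1 - P) * S⁻¹ = ((1 - P) * S) * S⁻¹ := by rw [hkey]
    _ = (1 - P) * (S * S⁻¹) := by rw [Matrix.mul_assoc]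
    _ = 1 - P := by rw [hSinv', Matrix.mul_one]
  -- Ω = 1 - S⁻¹ * (1 - P)
  have hPD : P * D = S - (1 - P) := by rw [hS]; noncomm_ring
  have hOmega : S⁻¹ * (P * D) = 1 - S⁻¹ * (1 - P) := by
    rw [hPD, Matrix.mul_sub, hSinv]
  constructor
  · rw [hOmega]
    have hQ : (S⁻¹ * (1 - P)) * (S⁻¹ * (1 - P)) = S⁻¹ * (1 - P) := by
      calc (S⁻¹ * (1 - P)) * (S⁻¹ * (1 - P))
          = S⁻¹ * (((1 - P) * S⁻¹) * (1 - P)) := by noncomm_ring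
        _ = S⁻¹ * ((1 - P) * (1 - P)) := by rw [hkey2]
        _ = S⁻¹ * (1 - P - (P - P * P)) := by rw [show (1-P)*(1-P) = 1 - P - (P - P*P) by noncomm_ring]
        _ = S⁻¹ * (1 - P) := by rw [hPP]; simp
    have : (1 - S⁻¹ * (1 - P)) * (1 - S⁻¹ * (1 - P))
        = 1 - S⁻¹ * (1 - P) - (S⁻¹ * (1 - P)) + (S⁻¹ * (1 - P)) * (S⁻¹ * (1 - P)) := by
      noncomm_ring
    rw [this, hQ]; abel
  · rw [hOmega]; abel
end
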